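/- arXiv:1102.3932 — 2 statements merged into one kernel-verified Lean document; each statement's English description precedes it below -/
import Mathlib

section
/- Let x be an infinite binary word and a ∈ {0,1}. Then the infinite word a·μ(x) (the letter a followed by μ(x)) is overlap-free if and only if ā·x is overlap-free, where ā = 1 − a denotes the complementary letter. -/
/-- An overlap: a word of the form a x a x a, with `a` a single letter. -/
def Overlap (w : List (Fin 2)) : Prop :=
  ∃ (a : Fin 2) (x : List (Fin 2)), w = [a] ++ x ++ [a] ++ x ++ [a]

/-- `w` occurs as a (contiguous) factor of the infinite word `x`. -/
def FactorOf (w : List (Fin 2)) (x : ℕ → Fin 2) : Prop :=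
  ∃ i, w = (List.range w.length).map (fun j => x (i + j))

/-- An infinite binary word is overlap-free if no finite factor is an overlap. -/
def OverlapFree (x : ℕ → Fin 2) : Prop :=
  ∀ w, FactorOf w x → ¬ Overlap w

/-- The Thue–Morse morphism applied to an infinite word. -/
def mu (x : ℕ → Fin 2) : ℕ → Fin 2 :=
  fun n => if n % 2 = 0 then x (n / 2) else 1 - x (n / 2)

/-- Prepend a finite word to an infinite word. -/
def prepend (p : List (Fin 2)) (w : ℕ → Fin 2) : ℕ → Fin 2 :=
  fun n => if h : n < p.length then p.get ⟨n, h⟩ else w (n - p.length)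

/-- `x` begins with the finite word `p`. -/
def BeginsWith (x : ℕ → Fin 2) (p : List (Fin 2)) : Prop :=
  ∀ i < p.length, x i = p.getD i 0

/-!
The word `a·μ(x)` is the tail of `μ(ā·x) = ā a μ(x)`, so it suffices to show that dropping the first
letter of `μ(z)` neither creates nor destroys overlaps. An overlap of `z` of period `m` at position
`i` makes `μ(z)` periodic with period `2m` on the `4m + 2` letters from `2i` on, and this still
contains an overlap after the first letter is dropped. Conversely, two equal adjacent letters of
`μ(z)` always sit at positions `2k + 1, 2k + 2`. An overlap of odd period contains such a pair, and
so does its translate by the period, which is impossible; so overlaps of `μ(z)` have even period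
`2m`, and reading off every other letter gives an overlap of `z` of period `m`.
-/

/-- The factor `y i ⋯ y (i + 2m)` of `y` is an overlap of period `m`. -/
def HasOverlapAt (y : ℕ → Fin 2) (i m : ℕ) : Prop :=
  0 < m ∧ ∀ j ≤ m, y (i + j) = y (i + j + m)

def factor (y : ℕ → Fin 2) (i n : ℕ) : List (Fin 2) :=
  (List.range n).map (fun j => y (i + j))

section Factor

variable {y : ℕ → Fin 2} {i m : ℕ}

@[simp]
lemma length_factor (y : ℕ → Fin 2) (i n : ℕ) : (factor y i n).length = n := by
  simp [factor]

lemma factor_add (y : ℕ → Fin 2) (i k l : ℕ) :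
    factor y i (k + l) = factor y i k ++ factor y (i + k) l := by
  simp only [factor, List.range_add, List.map_append, List.map_map]
  congr 1
  exact List.map_congr_left fun j _ => by simp [Nat.add_assoc]

lemma factor_one (y : ℕ → Fin 2) (i : ℕ) : factor y i 1 = [y i] := by
  simp [factor]

lemma factor_eq_factor_iff {i' n : ℕ} :
    factor y i n = factor y i' n ↔ ∀ j < n, y (i + j) = y (i' + j) := by
  simp [factor, List.map_inj_left]

lemma eq_of_cons_eq_factor {n : ℕ} {b : Fin 2} {x : List (Fin 2)}
    (h : b :: x = factor y i (n + 1)) : b = y i := by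
  rw [Nat.add_comm, factor_add, factor_one] at h
  exact (List.cons_eq_cons.1 h).1

lemma HasOverlapAt.overlap_factor (h : HasOverlapAt y i m) : Overlap (factor y i (m + m + 1)) := by
  obtain ⟨hm, hper⟩ := h
  have hsecond : factor y (i + m) m = factor y i m :=
    factor_eq_factor_iff.2 fun j hj => by rw [add_right_comm]; exact (hper j hj.le).symm
  have hlast : y (i + (m + m)) = y i := by
    rw [← add_assoc, ← hper m le_rfl, ← add_zero i, hper 0 (Nat.zero_le m), add_zero]
  have hfirst : factor y i m = [y i] ++ factor y (i + 1) (m - 1) := by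
    rw [← factor_one, ← factor_add, Nat.add_sub_cancel' hm]
  refine ⟨y i, factor y (i + 1) (m - 1), ?_⟩
  rw [factor_add, factor_add, hsecond, factor_one, hlast, hfirst]
  simp

lemma exists_hasOverlapAt_of_overlap {w : List (Fin 2)} (hf : FactorOf w y) (ho : Overlap w) :
    ∃ i m, HasOverlapAt y i m := by
  obtain ⟨b, x, rfl⟩ := ho
  obtain ⟨i, hi : _ = factor y i _⟩ := hf
  set m := x.length + 1 with hm
  have hlen : ([b] ++ x ++ [b] ++ x ++ [b]).length = m + m + 1 := by simp [hm]; omega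
  rw [hlen, factor_add, factor_add, factor_one] at hi
  obtain ⟨hi, hlast⟩ := List.append_inj' hi rfl
  rw [show [b] ++ x ++ [b] ++ x = (b :: x) ++ (b :: x) by simp] at hi
  obtain ⟨hfirst, hsecond⟩ := List.append_inj hi (by simp [hm])
  have hshift := factor_eq_factor_iff.1 (hfirst.symm.trans hsecond)
  refine ⟨i, m, Nat.succ_pos _, fun j hj => ?_⟩
  rcases hj.lt_or_eq with hj | rfl
  · rw [hshift j hj, add_right_comm]
  · rw [← eq_of_cons_eq_factor hsecond, List.singleton_inj.1 hlast, ← add_assoc]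

lemma overlapFree_iff_forall_not_hasOverlapAt :
    OverlapFree y ↔ ∀ i m, ¬ HasOverlapAt y i m := by
  refine ⟨fun hfree i m h => hfree _ ⟨i, by simp [factor]⟩ h.overlap_factor, fun h w hf ho => ?_⟩
  obtain ⟨i, m, hov⟩ := exists_hasOverlapAt_of_overlap hf ho
  exact h i m hov

end Factor

lemma fin_two_eq_add_one_of_ne {c d : Fin 2} (h : c ≠ d) : d = c + 1 := by
  revert c d; decide

lemma fin_two_ne_one_sub (c : Fin 2) : c ≠ 1 - c := by
  revert c; decide

open Fin.NatCast in
lemma exists_adjacent_eq_of_eq_add_odd {y : ℕ → Fin 2} {p m : ℕ} (hm : Odd m)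
    (h : y p = y (p + m)) : ∃ t < m, y (p + t) = y (p + t + 1) := by
  by_contra! hne
  have halt : ∀ k ≤ m, y (p + k) = y p + (k : Fin 2) := by
    intro k
    induction k with
    | zero => simp
    | succ k ih =>
      intro hk
      rw [← add_assoc, fin_two_eq_add_one_of_ne (hne k hk), ih (by omega), Nat.cast_succ, add_assoc]
  have hm1 : ((m : ℕ) : Fin 2) = 1 := Fin.ext (by simp [Fin.val_natCast, Nat.odd_iff.1 hm])
  rw [halt m le_rfl, hm1] at h
  exact one_ne_zero (left_eq_add.1 h)

section Mu

variable {z : ℕ → Fin 2} {i m : ℕ}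

lemma mu_eq_mu_iff {a b : ℕ} (h : a % 2 = b % 2) : mu z a = mu z b ↔ z (a / 2) = z (b / 2) := by
  unfold mu
  rw [h]
  split_ifs
  exacts [Iff.rfl, sub_right_inj]

lemma odd_of_mu_eq_mu_succ {n : ℕ} (h : mu z n = mu z (n + 1)) : Odd n := by
  rw [Nat.odd_iff]
  by_contra hn
  have hn : n % 2 = 0 := by omega
  simp only [mu, hn, show (n + 1) % 2 = 1 by omega, show (n + 1) / 2 = n / 2 by omega] at h
  exact fin_two_ne_one_sub _ h

lemma HasOverlapAt.even_of_mu (h : HasOverlapAt (mu z) i m) : Even m := by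
  obtain ⟨hm, hper⟩ := h
  by_contra hodd
  rw [Nat.not_even_iff_odd] at hodd
  obtain ⟨t, ht, hpair⟩ := exists_adjacent_eq_of_eq_add_odd hodd (by simpa using hper 0 hm.le)
  have hpair' : mu z (i + t + m) = mu z (i + t + m + 1) := by
    calc mu z (i + t + m) = mu z (i + (t + 1)) := (hper t ht.le).symm.trans hpair
      _ = mu z (i + t + m + 1) := by rw [hper (t + 1) ht]; congr 1; omega
  have h1 := Nat.odd_iff.1 (odd_of_mu_eq_mu_succ hpair)
  have h2 := Nat.odd_iff.1 (odd_of_mu_eq_mu_succ hpair')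
  have h3 := Nat.odd_iff.1 hodd
  omega

lemma HasOverlapAt.of_mu (h : HasOverlapAt (mu z) i (2 * m)) : HasOverlapAt z (i / 2) m := by
  refine ⟨by have := h.1; omega, fun j hj => ?_⟩
  have := (mu_eq_mu_iff (by omega)).1 (h.2 (2 * j) (by omega))
  rwa [show (i + 2 * j) / 2 = i / 2 + j by omega,
    show (i + 2 * j + 2 * m) / 2 = i / 2 + j + m by omega] at this

lemma HasOverlapAt.mu_succ (h : HasOverlapAt z i m) :
    HasOverlapAt (fun n => mu z (n + 1)) (2 * i) (2 * m) := by
  refine ⟨by simpa using h.1, fun j hj => ?_⟩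
  show mu z _ = mu z _
  rw [mu_eq_mu_iff (by omega), show (2 * i + j + 1) / 2 = i + (j + 1) / 2 by omega,
    show (2 * i + j + 2 * m + 1) / 2 = i + (j + 1) / 2 + m by omega]
  exact h.2 _ (by omega)

theorem overlapFree_mu_succ_iff :
    OverlapFree (fun n => mu z (n + 1)) ↔ OverlapFree z := by
  simp only [overlapFree_iff_forall_not_hasOverlapAt]
  constructor
  · intro hfree i m hz
    exact hfree _ _ hz.mu_succ
  · rintro hfree i m ⟨hm, hper⟩
    have hmu : HasOverlapAt (mu z) (i + 1) m :=
      ⟨hm, fun j hj => by simpa only [add_right_comm _ 1] using hper j hj⟩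
    obtain ⟨m, rfl⟩ := hmu.even_of_mu.two_dvd
    exact hfree _ _ hmu.of_mu

end Mu

lemma prepend_singleton_mu (x : ℕ → Fin 2) (a : Fin 2) :
    prepend [a] (mu x) = fun n => mu (prepend [1 - a] x) (n + 1) := by
  funext n
  rcases n with _ | n
  · simp [prepend, mu]
  · simp only [prepend, mu]
    simp [show (n + 1 + 1) % 2 = n % 2 by omega, show (n + 1 + 1) / 2 - 1 = n / 2 by omega]

theorem prepend_mu_overlapFree_iff (x : ℕ → Fin 2) (a : Fin 2) :
    OverlapFree (prepend [a] (mu x)) ↔ OverlapFree (prepend [1 - a] x) := by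
  rw [prepend_singleton_mu, overlapFree_mu_succ_iff]
end

section
/- Let x be an infinite binary word and a ∈ {0,1}. Then the infinite word a·a·μ(x) is overlap-free if and only if ā·x is overlap-free and x begins with the three letters ā, a, ā, where ā = 1 − a denotes the complementary letter. -/
/-- `y` has period `p` on the window `[a, b + p]`; an overlap of period `p` at `i` is
`PeriodicOn y p i (i + p)`. -/
def PeriodicOn (y : ℕ → Fin 2) (p a b : ℕ) : Prop :=
  ∀ t, a ≤ t → t ≤ b → y t = y (t + p)

namespace PeriodicOn

variable {y y' : ℕ → Fin 2} {p a b : ℕ}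

theorem mono {a' b' : ℕ} (h : PeriodicOn y p a b) (ha : a ≤ a') (hb : b' ≤ b) :
    PeriodicOn y p a' b' :=
  fun t h₁ h₂ => h t (ha.trans h₁) (h₂.trans hb)

theorem congr (h : PeriodicOn y p a b) (hy : ∀ t, a ≤ t → t ≤ b + p → y t = y' t) :
    PeriodicOn y' p a b := fun t h₁ h₂ => by
  rw [← hy t h₁ (by omega), ← hy (t + p) (by omega) (by omega)]
  exact h t h₁ h₂

end PeriodicOn

theorem List.map_range_two_mul_add_one {α : Type*} (f : ℕ → α) (p : ℕ) :
    (List.range (2 * p + 1)).map f =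
      (List.range p).map f ++ ((List.range p).map (fun j => f (p + j)) ++ [f (p + p)]) := by
  rw [show 2 * p + 1 = p + (p + 1) by omega, List.range_add, List.range_succ]
  simp

theorem overlap_map_range_iff {y : ℕ → Fin 2} {i n : ℕ} :
    Overlap ((List.range n).map (fun j => y (i + j))) ↔
      ∃ p, 0 < p ∧ n = 2 * p + 1 ∧ PeriodicOn y p i (i + p) := by
  set f : ℕ → Fin 2 := fun j => y (i + j)
  constructor
  · rintro ⟨c, u, hw⟩
    set p := u.length + 1
    have hn : n = 2 * p + 1 := by
      simpa [p, two_mul, add_assoc, add_comm, add_left_comm] using congrArg List.length hw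
    subst hn
    rw [List.map_range_two_mul_add_one,
      show [c] ++ u ++ [c] ++ u ++ [c] = (c :: u) ++ ((c :: u) ++ [c]) by simp] at hw
    obtain ⟨hA, hBc⟩ := List.append_inj hw (by simp [p])
    obtain ⟨hB, hc⟩ := List.append_inj hBc (by simp [p])
    have hper : ∀ j < p, f j = f (p + j) := by
      simpa [List.map_inj_left] using hA.trans hB.symm
    have hmid : f p = f (p + p) := by
      rw [show p = u.length + 1 from rfl, List.range_succ_eq_map] at hB
      simp only [List.map_cons, List.cons.injEq] at hB hc
      simpa using hB.1.trans hc.1.symm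
    refine ⟨p, by omega, rfl, fun t h₁ h₂ => ?_⟩
    obtain ⟨j, rfl⟩ := Nat.exists_eq_add_of_le h₁
    rcases (Nat.le_of_add_le_add_left h₂).lt_or_eq with hj | rfl
    · simpa [f, add_assoc, add_comm p] using hper j hj
    · simpa [f, add_assoc] using hmid
  · rintro ⟨p, hp, rfl, h⟩
    have hper : ∀ j ≤ p, f (p + j) = f j := fun j hj => by
      simpa [f, add_assoc, add_comm p] using (h (i + j) (by omega) (by omega)).symm
    obtain ⟨q, rfl⟩ := Nat.exists_eq_add_of_lt hp
    refine ⟨f 0, (List.range q).map (fun j => f (j + 1)), ?_⟩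
    rw [List.map_range_two_mul_add_one, List.map_congr_left (fun j hj => hper j ?_),
      show f (0 + q + 1 + (0 + q + 1)) = f 0 by rw [hper _ le_rfl, ← hper 0 (by omega)]]
    · simp [List.range_succ_eq_map, Function.comp_def]
    · simpa using (List.mem_range.mp hj).le

theorem overlapFree_iff_forall_not_periodicOn {y : ℕ → Fin 2} :
    OverlapFree y ↔ ∀ i p, 0 < p → ¬ PeriodicOn y p i (i + p) := by
  constructor
  · intro hy i p hp h
    exact hy _ ⟨i, by simp⟩ (overlap_map_range_iff.mpr ⟨p, hp, rfl, h⟩)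
  · rintro hy w ⟨i, hw⟩ hov
    rw [hw, overlap_map_range_iff] at hov
    obtain ⟨p, hp, -, h⟩ := hov
    exact hy i p hp h

@[simp]
theorem mu_two_mul (z : ℕ → Fin 2) (k : ℕ) : mu z (2 * k) = z k := by
  simp [mu]

@[simp]
theorem mu_two_mul_add_one (z : ℕ → Fin 2) (k : ℕ) : mu z (2 * k + 1) = 1 - z k := by
  simp [mu, Nat.add_mod, Nat.add_div]

section mu

variable {z : ℕ → Fin 2}

theorem PeriodicOn.map_mu {q a b : ℕ} (h : PeriodicOn z q a b) :
    PeriodicOn (mu z) (2 * q) (2 * a) (2 * b + 1) := by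
  intro t h₁ h₂
  obtain ⟨s, rfl | rfl⟩ := Nat.even_or_odd' t
  · rw [← mul_add, mu_two_mul, mu_two_mul, h s (by omega) (by omega)]
  · rw [show 2 * s + 1 + 2 * q = 2 * (s + q) + 1 by ring, mu_two_mul_add_one,
      mu_two_mul_add_one, h s (by omega) (by omega)]

theorem PeriodicOn.of_mu_two_mul {m i : ℕ} (h : PeriodicOn (mu z) (2 * m) i (i + 2 * m)) :
    PeriodicOn z m (i / 2) (i / 2 + m) := by
  intro s h₁ h₂
  obtain ⟨q, rfl | rfl⟩ := Nat.even_or_odd' i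
  · simpa [← mul_add] using h (2 * s) (by omega) (by omega)
  · have := h (2 * s + 1) (by omega) (by omega)
    rw [show 2 * s + 1 + 2 * m = 2 * (s + m) + 1 by ring, mu_two_mul_add_one,
      mu_two_mul_add_one] at this
    omega

theorem not_periodicOn_mu_one (i : ℕ) : ¬ PeriodicOn (mu z) 1 i (i + 1) := by
  intro h
  have := h (2 * ((i + 1) / 2)) (by omega) (by omega)
  rw [mu_two_mul, mu_two_mul_add_one] at this
  omega

theorem not_periodicOn_mu_three (s : ℕ) : ¬ PeriodicOn (mu z) 3 (2 * s) (2 * s + 2) := by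
  intro h
  have h₀ := h (2 * s) le_rfl (by omega)
  have h₁ := h (2 * s + 1) (by omega) (by omega)
  have h₂ := h (2 * s + 2) (by omega) le_rfl
  rw [show 2 * s + 3 = 2 * (s + 1) + 1 by ring, mu_two_mul, mu_two_mul_add_one] at h₀
  rw [show 2 * s + 1 + 3 = 2 * (s + 2) by ring, mu_two_mul, mu_two_mul_add_one] at h₁
  rw [show 2 * s + 2 = 2 * (s + 1) by ring, show 2 * (s + 1) + 3 = 2 * (s + 2) + 1 by ring,
    mu_two_mul, mu_two_mul_add_one] at h₂
  omega

theorem PeriodicOn.of_mu_two_mul_add_one {m s : ℕ}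
    (h : PeriodicOn (mu z) (2 * m + 1) (2 * s) (2 * s + 3)) :
    PeriodicOn z 1 (s + m) (s + m + 1) := by
  -- `e0, e1` equate `z (s + m)`, `z (s + m + 1)` with `1 - z s`; `e2, e3` do the same one step on
  have e0 := h (2 * s) le_rfl (by omega)
  have e1 := h (2 * s + 1) (by omega) (by omega)
  have e2 := h (2 * s + 2) (by omega) (by omega)
  have e3 := h (2 * s + 3) (by omega) le_rfl
  rw [show 2 * s + (2 * m + 1) = 2 * (s + m) + 1 by ring, mu_two_mul, mu_two_mul_add_one] at e0
  rw [show 2 * s + 1 + (2 * m + 1) = 2 * (s + m + 1) by ring, mu_two_mul,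
    mu_two_mul_add_one] at e1
  rw [show 2 * s + 2 = 2 * (s + 1) by ring,
    show 2 * (s + 1) + (2 * m + 1) = 2 * (s + m + 1) + 1 by ring,
    mu_two_mul, mu_two_mul_add_one] at e2
  rw [show 2 * s + 3 = 2 * (s + 1) + 1 by ring,
    show 2 * (s + 1) + 1 + (2 * m + 1) = 2 * (s + m + 1 + 1) by ring,
    mu_two_mul, mu_two_mul_add_one] at e3
  intro t ht₁ ht₂
  obtain rfl | rfl : t = s + m ∨ t = s + m + 1 := by omega
  all_goals omega

theorem OverlapFree.map_mu (hz : OverlapFree z) : OverlapFree (mu z) := by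
  rw [overlapFree_iff_forall_not_periodicOn] at hz ⊢
  intro i p hp h
  obtain ⟨m, rfl | rfl⟩ := Nat.even_or_odd' p
  · exact hz (i / 2) m (by omega) h.of_mu_two_mul
  · rcases (by omega : m = 0 ∨ m = 1 ∨ 2 ≤ m) with rfl | rfl | hm
    · exact not_periodicOn_mu_one i h
    · exact not_periodicOn_mu_three ((i + 1) / 2) (h.mono (by omega) (by omega))
    · have hs : PeriodicOn (mu z) (2 * m + 1) (2 * ((i + 1) / 2)) (2 * ((i + 1) / 2) + 3) :=
        h.mono (by omega) (by omega)
      exact hz _ 1 one_pos hs.of_mu_two_mul_add_one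

end mu

theorem mu_add_two (z : ℕ → Fin 2) (k : ℕ) : mu z (k + 2) = mu (fun n => z (n + 1)) k := by
  simp [mu, Nat.add_mod_right, Nat.add_div_right]

section prepend

variable {x : ℕ → Fin 2} {a : Fin 2}

theorem prepend_mu_eq_mu_prepend : ∀ {n : ℕ}, n ≠ 0 →
    prepend [a, a] (mu x) n = mu (prepend [1 - a] x) n
  | 1, _ => by simp [prepend, mu]
  | k + 2, _ => by simp [prepend, mu_add_two]

theorem beginsWith_of_overlapFree_prepend_mu (h : OverlapFree (prepend [a, a] (mu x))) :
    BeginsWith x [1 - a, a, 1 - a] := by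
  rw [overlapFree_iff_forall_not_periodicOn] at h
  have h₀ : x 0 = 1 - a := by
    by_contra hx
    refine h 0 1 one_pos fun t _ _ => ?_
    interval_cases t <;> simp [prepend, mu]
    omega
  have h₁ : x 1 = a := by
    by_contra hx
    refine h 1 2 two_pos fun t _ _ => ?_
    interval_cases t <;> simp [prepend, mu] <;> omega
  have h₂ : x 2 = 1 - a := by
    by_contra hx
    refine h 0 3 three_pos fun t _ _ => ?_
    interval_cases t <;> simp [prepend, mu] <;> omega
  intro i (hi : i < 3)
  interval_cases i <;> assumption

theorem not_periodicOn_prepend_mu_zero (hz : OverlapFree (prepend [1 - a] x))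
    (hx : BeginsWith x [1 - a, a, 1 - a]) {p : ℕ} (hp : 0 < p) :
    ¬ PeriodicOn (prepend [a, a] (mu x)) p 0 p := by
  intro h
  have hx₀ : x 0 = 1 - a := hx 0 (by simp)
  have hx₂ : x 2 = 1 - a := hx 2 (by simp)
  obtain ⟨m, rfl | rfl⟩ := Nat.even_or_odd' p
  · have e₀ := h 0 le_rfl (by omega)
    have e₁ := h 1 (by omega) (by omega)
    rw [zero_add, prepend_mu_eq_mu_prepend (n := 2 * m) (by omega), mu_two_mul] at e₀
    rw [add_comm, prepend_mu_eq_mu_prepend (n := 2 * m + 1) (by omega), mu_two_mul_add_one] at e₁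
    simp [prepend] at e₀ e₁
    omega
  · rcases (by omega : m = 0 ∨ m = 1 ∨ 2 ≤ m) with rfl | rfl | hm
    · have e := h 1 zero_le_one le_rfl
      simp [prepend, mu] at e
      omega
    · have e := h 3 (Nat.zero_le 3) le_rfl
      simp [prepend, mu] at e
      omega
    · have hs : PeriodicOn (mu (prepend [1 - a] x)) (2 * m + 1) (2 * 1) (2 * 1 + 3) :=
        (h.mono (by omega) (by omega)).congr fun t ht _ => prepend_mu_eq_mu_prepend (by omega)
      exact overlapFree_iff_forall_not_periodicOn.mp hz _ 1 one_pos hs.of_mu_two_mul_add_one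

end prepend

theorem prepend_aa_mu_overlapFree_iff (x : ℕ → Fin 2) (a : Fin 2) :
    OverlapFree (prepend [a, a] (mu x)) ↔
      (OverlapFree (prepend [1 - a] x) ∧ BeginsWith x [1 - a, a, 1 - a]) := by
  constructor
  · intro hY
    refine ⟨?_, beginsWith_of_overlapFree_prepend_mu hY⟩
    rw [overlapFree_iff_forall_not_periodicOn] at hY ⊢
    intro i q hq h
    refine hY (2 * i + 1) (2 * q) (by omega) ?_
    exact (h.map_mu.mono (by omega) (by omega)).congr fun t _ _ =>
      (prepend_mu_eq_mu_prepend (by omega)).symm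
  · rintro ⟨hz, hx⟩
    rw [overlapFree_iff_forall_not_periodicOn]
    intro i p hp h
    rcases Nat.eq_zero_or_pos i with rfl | hi
    · exact not_periodicOn_prepend_mu_zero hz hx hp (by rwa [zero_add] at h)
    · exact overlapFree_iff_forall_not_periodicOn.mp hz.map_mu i p hp
        (h.congr fun t ht _ => prepend_mu_eq_mu_prepend (by omega))
end
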